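/- arXiv:2004.03954 — 2 statements merged into one kernel-verified Lean document; each statement's English description precedes it below -/
import Mathlib

section
/- Suppose the DM-TWC satisfies condition (a) and condition (b2), and suppose P*_{X₁}(x₁) > 0 for all x₁ ∈ 𝒳₁. Then there exists a distribution P*_{X₂} on 𝒳₂ that is a common conditional output entropy maximizer: for every x₁ ∈ 𝒳₁, P*_{X₂} maximizes P ↦ H(Σ_{x₂} P(x₂)·P_{Y₁|X₁,X₂}(·|x₁,x₂)) over all distributions P on 𝒳₂. -/
open scoped BigOperators

/-- `P` is a probability distribution on the finite alphabet `A`. -/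
def IsDist {A : Type*} [Fintype A] (P : A → ℝ) : Prop :=
  (∀ a, 0 ≤ P a) ∧ ∑ a, P a = 1

/-- Input–output mutual information 𝓘(P, W) (in bits) of a channel `W`
from the finite alphabet `A` to the finite alphabet `B` under input distribution `P`. -/
noncomputable def mutInfo {A B : Type*} [Fintype A] [Fintype B]
    (P : A → ℝ) (W : A → B → ℝ) : ℝ :=
  ∑ a, ∑ b, P a * W a b * Real.logb 2 (W a b / ∑ a', P a' * W a' b)

/-- Shannon entropy (base 2) of a distribution on a finite alphabet. -/
noncomputable def ent {B : Type*} [Fintype B] (Q : B → ℝ) : ℝ :=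
  -∑ b, Q b * Real.logb 2 (Q b)

section TWC

variable {X1 X2 Y1 Y2 : Type*} [Fintype X1] [Fintype X2] [Fintype Y1] [Fintype Y2]

/-- A joint input distribution on `X1 × X2`. -/
def IsJointDist (P : X1 → X2 → ℝ) : Prop :=
  (∀ x1 x2, 0 ≤ P x1 x2) ∧ ∑ x1, ∑ x2, P x1 x2 = 1

/-- Marginal of a joint input distribution on `X1`. -/
noncomputable def margin1 (P : X1 → X2 → ℝ) (x1 : X1) : ℝ := ∑ x2, P x1 x2

/-- Marginal of a joint input distribution on `X2`. -/
noncomputable def margin2 (P : X1 → X2 → ℝ) (x2 : X2) : ℝ := ∑ x1, P x1 x2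

/-- Conditional distribution P_{X₁|X₂=x₂}. -/
noncomputable def cond1given2 (P : X1 → X2 → ℝ) (x2 : X2) (x1 : X1) : ℝ :=
  P x1 x2 / margin2 P x2

/-- Conditional distribution P_{X₂|X₁=x₁}. -/
noncomputable def cond2given1 (P : X1 → X2 → ℝ) (x1 : X1) (x2 : X2) : ℝ :=
  P x1 x2 / margin1 P x1

/-- The conditional mutual information I(X₁;Y₂|X₂) under the joint input distribution `P`,
where `W2` is the marginal channel P_{Y₂|X₁,X₂}. -/
noncomputable def condMI12 (P : X1 → X2 → ℝ) (W2 : X1 → X2 → Y2 → ℝ) : ℝ :=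
  ∑ x2, margin2 P x2 * mutInfo (cond1given2 P x2) (fun x1 => W2 x1 x2)

/-- The conditional mutual information I(X₂;Y₁|X₁) under the joint input distribution `P`,
where `W1` is the marginal channel P_{Y₁|X₁,X₂}. -/
noncomputable def condMI21 (P : X1 → X2 → ℝ) (W1 : X1 → X2 → Y1 → ℝ) : ℝ :=
  ∑ x1, margin1 P x1 * mutInfo (cond2given1 P x1) (fun x2 => W1 x1 x2)

/-- The rate region 𝓡(P_{X₁,X₂}). -/
noncomputable def rateRegion (W1 : X1 → X2 → Y1 → ℝ) (W2 : X1 → X2 → Y2 → ℝ)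
    (P : X1 → X2 → ℝ) : Set (ℝ × ℝ) :=
  {r | 0 ≤ r.1 ∧ r.1 ≤ condMI12 P W2 ∧ 0 ≤ r.2 ∧ r.2 ≤ condMI21 P W1}

/-- Shannon's inner bound C_I: the closure of the convex hull of the union of the
rate regions of all product input distributions. -/
noncomputable def innerBound (W1 : X1 → X2 → Y1 → ℝ) (W2 : X1 → X2 → Y2 → ℝ) :
    Set (ℝ × ℝ) :=
  closure (convexHull ℝ
    (⋃ P ∈ {P : X1 → X2 → ℝ |
        ∃ P1 P2, IsDist P1 ∧ IsDist P2 ∧ P = fun x1 x2 => P1 x1 * P2 x2},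
      rateRegion W1 W2 P))

/-- Shannon's outer bound C_O: the union of the rate regions of all joint input
distributions. -/
noncomputable def outerBound (W1 : X1 → X2 → Y1 → ℝ) (W2 : X1 → X2 → Y2 → ℝ) :
    Set (ℝ × ℝ) :=
  ⋃ P ∈ {P : X1 → X2 → ℝ | IsJointDist P}, rateRegion W1 W2 P

/-- The largest input–output mutual information of the one-way channel
P_{Y₂|X₁,X₂=x₂}. -/
noncomputable def capAt (W2 : X1 → X2 → Y2 → ℝ) (x2 : X2) : ℝ :=
  sSup {I | ∃ P : X1 → ℝ, IsDist P ∧ I = mutInfo P (fun x1 => W2 x1 x2)}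

/-- α*: how close the channels {P_{Y₂|X₁,X₂=x₂}} are to having a common optimal
input distribution. -/
noncomputable def alphaStar (W2 : X1 → X2 → Y2 → ℝ) : ℝ :=
  sInf {a | ∃ Pt : X1 → ℝ, IsDist Pt ∧
    a = ⨆ x2, |mutInfo Pt (fun x1 => W2 x1 x2) - capAt W2 x2|}

/-- β*: the degree of invariance in the input–output mutual information of the
channels {P_{Y₁|X₁=x₁,X₂}}. -/
noncomputable def betaStar (W1 : X1 → X2 → Y1 → ℝ) : ℝ :=
  sSup {b | ∃ (P : X2 → ℝ) (x1 x1' : X1), IsDist P ∧ x1 ≠ x1' ∧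
    b = |mutInfo P (fun x2 => W1 x1 x2) - mutInfo P (fun x2 => W1 x1' x2)|}

/-- I*₁ = max_{x₂} max_{P} 𝓘(P, P_{Y₂|X₁,X₂=x₂}). -/
noncomputable def IStar1 (W2 : X1 → X2 → Y2 → ℝ) : ℝ :=
  sSup {I | ∃ (x2 : X2) (P : X1 → ℝ), IsDist P ∧ I = mutInfo P (fun x1 => W2 x1 x2)}

/-- I*₂ = max_{x₁} max_{P} 𝓘(P, P_{Y₁|X₁=x₁,X₂}). -/
noncomputable def IStar2 (W1 : X1 → X2 → Y1 → ℝ) : ℝ :=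
  sSup {I | ∃ (x1 : X1) (P : X2 → ℝ), IsDist P ∧ I = mutInfo P (fun x2 => W1 x1 x2)}

/-- Condition (a): `Pstar` is a common optimal input distribution for the channels
{P_{Y₂|X₁,X₂=x₂} : x₂ ∈ 𝒳₂}. -/
def CondA (W2 : X1 → X2 → Y2 → ℝ) (Pstar : X1 → ℝ) : Prop :=
  IsDist Pstar ∧ ∀ x2 : X2, ∀ P : X1 → ℝ, IsDist P →
    mutInfo P (fun x1 => W2 x1 x2) ≤ mutInfo Pstar (fun x1 => W2 x1 x2)

/-- Condition (b1): for every input distribution on 𝒳₂, the input–output mutual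
information of P_{Y₁|X₁=x₁,X₂} does not depend on x₁. -/
def CondB1 (W1 : X1 → X2 → Y1 → ℝ) : Prop :=
  ∀ P : X2 → ℝ, IsDist P → ∀ x1 x1' : X1,
    mutInfo P (fun x2 => W1 x1 x2) = mutInfo P (fun x2 => W1 x1' x2)

/-- H(Y₁|X₁,X₂) under the joint input distribution `P`. -/
noncomputable def condEntFull (P : X1 → X2 → ℝ) (W1 : X1 → X2 → Y1 → ℝ) : ℝ :=
  ∑ x1, ∑ x2, P x1 x2 * ent (W1 x1 x2)

/-- H(Y₁|X₁) under the joint input distribution `P`. -/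
noncomputable def condEntY1X1 (P : X1 → X2 → ℝ) (W1 : X1 → X2 → Y1 → ℝ) : ℝ :=
  ∑ x1, margin1 P x1 * ent (fun y1 => ∑ x2, cond2given1 P x1 x2 * W1 x1 x2 y1)

/-- Condition (b2), part (i): H(Y₁|X₁,X₂) depends on the joint input distribution
only through its marginal on 𝒳₂. -/
def CondB2i (W1 : X1 → X2 → Y1 → ℝ) : Prop :=
  ∀ P Q : X1 → X2 → ℝ, IsJointDist P → IsJointDist Q →
    margin2 P = margin2 Q → condEntFull P W1 = condEntFull Q W1

/-- Condition (b2), part (ii), relative to the common optimal input `Pstar`: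
H⁽¹⁾(Y₁|X₁) ≤ H⁽²⁾(Y₁|X₁) where P⁽²⁾ = P*_{X₁}·P⁽¹⁾_{X₂}. -/
def CondB2ii (W1 : X1 → X2 → Y1 → ℝ) (Pstar : X1 → ℝ) : Prop :=
  ∀ P : X1 → X2 → ℝ, IsJointDist P →
    condEntY1X1 P W1 ≤ condEntY1X1 (fun x1 x2 => Pstar x1 * margin2 P x2) W1


/-!
Let `P₂` maximize the `P*`-weighted output entropy `∑ₓ₁ P*(x₁) H(Y₁ | X₁ = x₁)` over the
(compact) simplex of input distributions on `𝒳₂`. Given `x₁` and `P`, take the joint input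
distribution with rows `P*(x₁') · P₂`, except that row `x₁` is `P*(x₁) · P`. By (b2)(ii) its
weighted output entropy is at most that of `P*` times its `𝒳₂`-marginal, hence at most that of
`P₂`. The two weighted sums differ only in the `x₁` term, and `P*(x₁) > 0`.
-/

section Entropy

variable {A B : Type*} [Fintype A] [Fintype B]

lemma ent_eq_sum_negMulLog (Q : B → ℝ) : ent Q = (∑ b, Real.negMulLog (Q b)) / Real.log 2 := by
  simp only [ent, Real.negMulLog, Real.logb, Finset.sum_div, ← Finset.sum_neg_distrib]
  refine Finset.sum_congr rfl fun b _ => ?_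
  ring

lemma continuous_ent : Continuous (ent : (B → ℝ) → ℝ) := by
  simp only [funext ent_eq_sum_negMulLog]
  fun_prop

lemma exists_isDist_forall_le [Nonempty A] {f : (A → ℝ) → ℝ} (hf : Continuous f) :
    ∃ P, IsDist P ∧ ∀ Q, IsDist Q → f Q ≤ f P := by
  classical
  obtain ⟨a⟩ := ‹Nonempty A›
  obtain ⟨P, hP, hmax⟩ := (isCompact_stdSimplex ℝ A).exists_isMaxOn
    ⟨_, single_mem_stdSimplex ℝ a⟩ hf.continuousOn
  exact ⟨P, hP, fun Q hQ => hmax hQ⟩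

end Entropy

/-- H(Y₁|X₁ = x₁) when X₂ is distributed according to `P`. -/
noncomputable def outEnt (W1 : X1 → X2 → Y1 → ℝ) (x1 : X1) (P : X2 → ℝ) : ℝ :=
  ent fun y1 => ∑ x2, P x2 * W1 x1 x2 y1

lemma continuous_sum_mul_outEnt (W1 : X1 → X2 → Y1 → ℝ) (p : X1 → ℝ) :
    Continuous fun P => ∑ x1, p x1 * outEnt W1 x1 P :=
  continuous_finsetSum _ fun _ _ => continuous_const.mul (continuous_ent.comp (by fun_prop))

lemma IsJointDist.isDist_margin2 {P : X1 → X2 → ℝ} (hP : IsJointDist P) :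
    IsDist (margin2 P) :=
  ⟨fun x2 => Finset.sum_nonneg fun x1 _ => hP.1 x1 x2, by rw [← hP.2]; exact Finset.sum_comm⟩

lemma isJointDist_mul_rows {p : X1 → ℝ} (hp : IsDist p) {c : X1 → X2 → ℝ}
    (hc : ∀ x1, IsDist (c x1)) : IsJointDist fun x1 x2 => p x1 * c x1 x2 := by
  refine ⟨fun x1 x2 => mul_nonneg (hp.1 x1) ((hc x1).1 x2), ?_⟩
  simp only [← Finset.mul_sum, (hc _).2, mul_one, hp.2]

lemma condEntY1X1_mul_rows (W1 : X1 → X2 → Y1 → ℝ) {p : X1 → ℝ} (hp : ∀ x1, p x1 ≠ 0)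
    {c : X1 → X2 → ℝ} (hc : ∀ x1, ∑ x2, c x1 x2 = 1) :
    condEntY1X1 (fun x1 x2 => p x1 * c x1 x2) W1 = ∑ x1, p x1 * outEnt W1 x1 (c x1) := by
  simp only [condEntY1X1, cond2given1, margin1, ← Finset.mul_sum, hc, mul_one,
    mul_div_cancel_left₀ _ (hp _), outEnt]

lemma CondB2ii.sum_outEnt_le {W1 : X1 → X2 → Y1 → ℝ} {p : X1 → ℝ} (hb : CondB2ii W1 p)
    (hp : IsDist p) (hpos : ∀ x1, 0 < p x1) {c : X1 → X2 → ℝ} (hc : ∀ x1, IsDist (c x1)) :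
    ∑ x1, p x1 * outEnt W1 x1 (c x1) ≤
      ∑ x1, p x1 * outEnt W1 x1 (margin2 fun x1 x2 => p x1 * c x1 x2) := by
  have hQ := isJointDist_mul_rows hp hc
  have hpne : ∀ x1, p x1 ≠ 0 := fun x1 => (hpos x1).ne'
  rw [← condEntY1X1_mul_rows W1 hpne fun x1 => (hc x1).2,
    ← condEntY1X1_mul_rows (c := fun _ => margin2 _) W1 hpne fun _ => hQ.isDist_margin2.2]
  exact hb _ hQ

lemma CondB2ii.outEnt_le_of_forall_sum_le {W1 : X1 → X2 → Y1 → ℝ} {p : X1 → ℝ}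
    (hb : CondB2ii W1 p) (hp : IsDist p) (hpos : ∀ x1, 0 < p x1) {P2 : X2 → ℝ} (hP2 : IsDist P2)
    (hmax : ∀ Q, IsDist Q → ∑ x1, p x1 * outEnt W1 x1 Q ≤ ∑ x1, p x1 * outEnt W1 x1 P2)
    (x1 : X1) {P : X2 → ℝ} (hP : IsDist P) : outEnt W1 x1 P ≤ outEnt W1 x1 P2 := by
  classical
  set c : X1 → X2 → ℝ := Function.update (fun _ => P2) x1 P
  have hc : ∀ x, IsDist (c x) := fun x => by
    rcases eq_or_ne x x1 with rfl | h
    · simpa [c] using hP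
    · simpa [c, h] using hP2
  have hsum : ∑ x, p x * outEnt W1 x (c x) ≤ ∑ x, p x * outEnt W1 x P2 :=
    (hb.sum_outEnt_le hp hpos hc).trans (hmax _ (isJointDist_mul_rows hp hc).isDist_margin2)
  have hdiff : ∑ x, p x * (outEnt W1 x (c x) - outEnt W1 x P2) =
      p x1 * (outEnt W1 x1 P - outEnt W1 x1 P2) := by
    rw [Finset.sum_eq_single x1 (fun x _ h => by simp [c, h]) (by simp)]
    simp [c]
  have hx1 : p x1 * (outEnt W1 x1 P - outEnt W1 x1 P2) ≤ 0 := by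
    rw [← hdiff]
    simpa only [mul_sub, Finset.sum_sub_distrib, sub_nonpos] using hsum
  exact sub_nonpos.mp (nonpos_of_mul_nonpos_right hx1 (hpos x1))

theorem stmt2_general [Nonempty X2]
    (W1 : X1 → X2 → Y1 → ℝ) (W2 : X1 → X2 → Y2 → ℝ)
    (Pstar : X1 → ℝ) (ha : CondA W2 Pstar)
    (hb2ii : CondB2ii W1 Pstar)
    (hpos : ∀ x1, 0 < Pstar x1) :
    ∃ Pstar2 : X2 → ℝ, IsDist Pstar2 ∧
      ∀ x1 : X1, ∀ P : X2 → ℝ, IsDist P →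
        ent (fun y1 => ∑ x2, P x2 * W1 x1 x2 y1) ≤
          ent (fun y1 => ∑ x2, Pstar2 x2 * W1 x1 x2 y1) := by
  obtain ⟨Pstar2, hPstar2, hmax⟩ := exists_isDist_forall_le (continuous_sum_mul_outEnt W1 Pstar)
  exact ⟨Pstar2, hPstar2, fun x1 P hP =>
    hb2ii.outEnt_le_of_forall_sum_le ha.1 hpos hPstar2 hmax x1 hP⟩

/-- under conditions (a) and (b2), with P*_{X₁} strictly positive, there is
a common conditional output entropy maximizer P*_{X₂}. -/
theorem stmt2 [Nonempty X1] [Nonempty X2]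
    (W1 : X1 → X2 → Y1 → ℝ) (W2 : X1 → X2 → Y2 → ℝ)
    (hW1 : ∀ x1 x2, IsDist (W1 x1 x2)) (hW2 : ∀ x1 x2, IsDist (W2 x1 x2))
    (Pstar : X1 → ℝ) (ha : CondA W2 Pstar)
    (hb2i : CondB2i W1) (hb2ii : CondB2ii W1 Pstar)
    (hpos : ∀ x1, 0 < Pstar x1) :
    ∃ Pstar2 : X2 → ℝ, IsDist Pstar2 ∧
      ∀ x1 : X1, ∀ P : X2 → ℝ, IsDist P →
        ent (fun y1 => ∑ x2, P x2 * W1 x1 x2 y1) ≤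
          ent (fun y1 => ∑ x2, Pstar2 x2 * W1 x1 x2 y1) :=
  stmt2_general W1 W2 Pstar ha hb2ii hpos

end TWC
end

section
/- Suppose the DM-TWC satisfies condition (a) and condition (b2). Then for every stochastic kernel x₁ ↦ P_{X₂|X₁=x₁} from 𝒳₁ to distributions on 𝒳₂, writing P̄_{X₂} = Σ_{x₁} P*_{X₁}(x₁)·P_{X₂|X₁=x₁} for the averaged input, one has Σ_{x₁} P*_{X₁}(x₁)·𝓘(P_{X₂|X₁=x₁}, P_{Y₁|X₁=x₁,X₂}) ≤ Σ_{x₁} P*_{X₁}(x₁)·𝓘(P̄_{X₂}, P_{Y₁|X₁=x₁,X₂}); that is, using the average input at terminal 2 incurs no information loss when terminal 1 uses the common optimal input P*_{X₁}. -/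
open scoped BigOperators

theorem mutInfo_eq_ent_sub {A B : Type*} [Fintype A] [Fintype B] (P : A → ℝ) (W : A → B → ℝ)
    (hP : ∀ a, 0 ≤ P a) (hW : ∀ a b, 0 ≤ W a b) :
    mutInfo P W = ent (fun b => ∑ a, P a * W a b) - ∑ a, P a * ent (W a) := by
  have hlog : ∀ a b, P a * W a b * Real.logb 2 (W a b / ∑ a', P a' * W a' b)
      = P a * W a b * Real.logb 2 (W a b)
        - P a * W a b * Real.logb 2 (∑ a', P a' * W a' b) := by
    intro a b
    rcases (hP a).eq_or_lt with hPa | hPa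
    · simp [← hPa]
    rcases (hW a b).eq_or_lt with hWab | hWab
    · simp [← hWab]
    have hsum : 0 < ∑ a', P a' * W a' b :=
      (mul_pos hPa hWab).trans_le <| Finset.single_le_sum
        (f := fun a' => P a' * W a' b) (fun i _ => mul_nonneg (hP i) (hW i b)) (Finset.mem_univ a)
    rw [Real.logb_div hWab.ne' hsum.ne', mul_sub]
  have hcross : ∑ a, P a * ∑ b, W a b * Real.logb 2 (∑ a', P a' * W a' b)
      = ∑ b, (∑ a, P a * W a b) * Real.logb 2 (∑ a', P a' * W a' b) := by
    simp_rw [Finset.mul_sum, Finset.sum_mul, mul_assoc]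
    exact Finset.sum_comm
  simp only [mutInfo, ent, hlog, Finset.sum_sub_distrib, mul_assoc, ← Finset.mul_sum, hcross,
    mul_neg, Finset.sum_neg_distrib]
  ring

theorem isDist_sum_mul {A B : Type*} [Fintype A] [Fintype B] {p : A → ℝ} {k : A → B → ℝ}
    (hp : IsDist p) (hk : ∀ a, IsDist (k a)) : IsDist (fun b => ∑ a, p a * k a b) := by
  refine ⟨fun b => Finset.sum_nonneg fun a _ => mul_nonneg (hp.1 a) ((hk a).1 b), ?_⟩
  rw [Finset.sum_comm]
  simp_rw [← Finset.mul_sum, (hk _).2, mul_one]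
  exact hp.2

section JointOfKernel

variable {X1 X2 Y1 : Type*} [Fintype X2] [Fintype Y1]

def jointOfKernel (p : X1 → ℝ) (k : X1 → X2 → ℝ) (x1 : X1) (x2 : X2) : ℝ := p x1 * k x1 x2

variable {p : X1 → ℝ} {k : X1 → X2 → ℝ}

theorem margin1_jointOfKernel (hk : ∀ x1, ∑ x2, k x1 x2 = 1) :
    margin1 (jointOfKernel p k) = p := by
  funext x1
  simp [margin1, jointOfKernel, ← Finset.mul_sum, hk]

theorem cond2given1_jointOfKernel (hk : ∀ x1, ∑ x2, k x1 x2 = 1) {x1 : X1} (hx1 : p x1 ≠ 0) :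
    cond2given1 (jointOfKernel p k) x1 = k x1 := by
  funext x2
  rw [cond2given1, margin1_jointOfKernel hk, jointOfKernel, mul_div_cancel_left₀ _ hx1]

variable [Fintype X1]

theorem isJointDist_jointOfKernel (hp : IsDist p) (hk : ∀ x1, IsDist (k x1)) :
    IsJointDist (jointOfKernel p k) := by
  refine ⟨fun x1 x2 => mul_nonneg (hp.1 x1) ((hk x1).1 x2), ?_⟩
  simp_rw [jointOfKernel, ← Finset.mul_sum, (hk _).2, mul_one]
  exact hp.2

theorem condEntY1X1_jointOfKernel (hk : ∀ x1, ∑ x2, k x1 x2 = 1) (W : X1 → X2 → Y1 → ℝ) :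
    condEntY1X1 (jointOfKernel p k) W
      = ∑ x1, p x1 * ent (fun y => ∑ x2, k x1 x2 * W x1 x2 y) := by
  refine Finset.sum_congr rfl fun x1 _ => ?_
  rw [margin1_jointOfKernel hk]
  rcases eq_or_ne (p x1) 0 with hx1 | hx1
  · simp [hx1]
  · rw [cond2given1_jointOfKernel hk hx1]

theorem condEntFull_jointOfKernel (W : X1 → X2 → Y1 → ℝ) :
    condEntFull (jointOfKernel p k) W = ∑ x1, p x1 * ∑ x2, k x1 x2 * ent (W x1 x2) := by
  simp_rw [condEntFull, jointOfKernel, Finset.mul_sum, mul_assoc]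

theorem sum_mul_mutInfo_eq_condEntY1X1_sub_condEntFull
    (hk : ∀ x1, IsDist (k x1)) {W : X1 → X2 → Y1 → ℝ} (hW : ∀ x1 x2, IsDist (W x1 x2)) :
    ∑ x1, p x1 * mutInfo (k x1) (W x1)
      = condEntY1X1 (jointOfKernel p k) W - condEntFull (jointOfKernel p k) W := by
  rw [condEntY1X1_jointOfKernel fun x1 => (hk x1).2, condEntFull_jointOfKernel,
    ← Finset.sum_sub_distrib]
  refine Finset.sum_congr rfl fun x1 _ => ?_
  rw [mutInfo_eq_ent_sub _ _ (hk x1).1 fun x2 => (hW x1 x2).1, mul_sub]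

end JointOfKernel

section TWC

variable {X1 X2 Y1 Y2 : Type*} [Fintype X1] [Fintype X2] [Fintype Y1] [Fintype Y2]

theorem stmt3_general
    (W1 : X1 → X2 → Y1 → ℝ) (W2 : X1 → X2 → Y2 → ℝ)
    (hW1 : ∀ x1 x2, IsDist (W1 x1 x2))
    (Pstar : X1 → ℝ) (ha : CondA W2 Pstar)
    (hb2i : CondB2i W1) (hb2ii : CondB2ii W1 Pstar)
    (K : X1 → X2 → ℝ) (hK : ∀ x1, IsDist (K x1)) :
    ∑ x1, Pstar x1 * mutInfo (K x1) (fun x2 => W1 x1 x2) ≤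
      ∑ x1, Pstar x1 *
        mutInfo (fun x2 => ∑ x1', Pstar x1' * K x1' x2) (fun x2 => W1 x1 x2) := by
  set Kbar : X2 → ℝ := fun x2 => ∑ x1', Pstar x1' * K x1' x2
  have hPstar : IsDist Pstar := ha.1
  have hKbar : ∀ _ : X1, IsDist Kbar := fun _ => isDist_sum_mul hPstar hK
  have hPK := isJointDist_jointOfKernel hPstar hK
  have hPKbar := isJointDist_jointOfKernel hPstar hKbar
  have hfull : condEntFull (jointOfKernel Pstar K) W1
      = condEntFull (jointOfKernel Pstar fun _ => Kbar) W1 :=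
    hb2i _ _ hPK hPKbar <| funext fun x2 => by
      simp [margin2, jointOfKernel, Kbar, ← Finset.sum_mul, hPstar.2]
  have hcond : condEntY1X1 (jointOfKernel Pstar K) W1
      ≤ condEntY1X1 (jointOfKernel Pstar fun _ => Kbar) W1 :=
    hb2ii _ hPK
  rw [sum_mul_mutInfo_eq_condEntY1X1_sub_condEntFull hK hW1,
    sum_mul_mutInfo_eq_condEntY1X1_sub_condEntFull hKbar hW1]
  linarith

/-- under conditions (a) and (b2), using the averaged input
P̄_{X₂} = Σ_{x₁} P*_{X₁}(x₁) P_{X₂|X₁=x₁} at terminal 2 incurs no information loss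
when terminal 1 uses the common optimal input P*_{X₁}. -/
theorem stmt3 [Nonempty X1] [Nonempty X2]
    (W1 : X1 → X2 → Y1 → ℝ) (W2 : X1 → X2 → Y2 → ℝ)
    (hW1 : ∀ x1 x2, IsDist (W1 x1 x2)) (hW2 : ∀ x1 x2, IsDist (W2 x1 x2))
    (Pstar : X1 → ℝ) (ha : CondA W2 Pstar)
    (hb2i : CondB2i W1) (hb2ii : CondB2ii W1 Pstar)
    (K : X1 → X2 → ℝ) (hK : ∀ x1, IsDist (K x1)) :
    ∑ x1, Pstar x1 * mutInfo (K x1) (fun x2 => W1 x1 x2) ≤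
      ∑ x1, Pstar x1 *
        mutInfo (fun x2 => ∑ x1', Pstar x1' * K x1' x2) (fun x2 => W1 x1 x2) :=
  stmt3_general W1 W2 hW1 Pstar ha hb2i hb2ii K hK

end TWC
end
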